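/- Fix a real wave number k ≠ 0. With A(k²,ε) and B(k²,ε) defined from the non-real roots λ₁(ε), λ₂(ε) of P_k as A = −4ε(1 + ε(λ₁+λ₂))/(3 + 3ε(λ₁+λ₂) + ε²(3λ₁λ₂ − 4k²)) and B = −4ε²/(3 + 3ε(λ₁+λ₂) + ε²(3λ₁λ₂ − 4k²)), the 2×2 slow-hydrodynamics generator M(ε) = [[0, −(5/3)ik], [−ik(1 − k²B), k²A]] converges entrywise, as ε → 0⁺, to the Euler generator M_E = [[0, −(5/3)ik], [−ik, 0]]; that is, lim_{ε→0⁺} k²A(k²,ε) = 0 and lim_{ε→0⁺} k²B(k²,ε) = 0. -/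

import Mathlib

/-- The characteristic polynomial `P_k(λ)` of the Grad generator. -/
noncomputable def gradP (ε k : ℝ) (l : ℂ) : ℂ :=
  -l^3 - (1/ε) * l^2 - 3 * k^2 * l - (5/3) * k^2 / ε

/-- The slow-manifold closure coefficient `A(k²,ε)` built from the two acoustic roots. -/
noncomputable def gradA (ε k : ℝ) (l₁ l₂ : ℂ) : ℂ :=
  -4 * ε * (1 + ε * (l₁ + l₂)) /
    (3 + 3 * ε * (l₁ + l₂) + ε^2 * (3 * l₁ * l₂ - 4 * k^2))

/-- The slow-manifold closure coefficient `B(k²,ε)` built from the two acoustic roots. -/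
noncomputable def gradB (ε k : ℝ) (l₁ l₂ : ℂ) : ℂ :=
  -4 * ε^2 /
    (3 + 3 * ε * (l₁ + l₂) + ε^2 * (3 * l₁ * l₂ - 4 * k^2))

set_option maxHeartbeats 1000000 in
lemma grad_aux (k ε : ℝ) (hk : k ≠ 0) (hε : 0 < ε) (a : ℂ)
    (hroot : gradP ε k a = 0) (him : a.im ≠ 0) :
    ‖(k:ℂ)^2 * gradA ε k a (starRingEnd ℂ a)‖ ≤ 108/25 * k^2 * ε ∧
    ‖(k:ℂ)^2 * gradB ε k a (starRingEnd ℂ a)‖ ≤ 108/25 * k^2 * ε^2 := by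
  have hεC : (ε:ℂ) ≠ 0 := by exact_mod_cast hε.ne'
  set b := (starRingEnd ℂ) a with hb
  set x := a.re with hx
  set y := a.im with hy
  have eq1 : (ε:ℂ)*a^3 + a^2 + 3*k^2*ε*a + (5/3)*k^2 = 0 := by
    have h3 : (-3:ℂ)*ε ≠ 0 := by simpa using hεC
    apply mul_left_cancel₀ h3
    rw [mul_zero]
    rw [gradP] at hroot; field_simp at hroot
    linear_combination (ε:ℂ) * hroot
  have eq2 : (ε:ℂ)*b^3 + b^2 + 3*k^2*ε*b + (5/3)*k^2 = 0 := by
    have h := congrArg (starRingEnd ℂ) eq1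
    simp only [map_add, map_mul, map_pow, map_div₀, map_ofNat, Complex.conj_ofReal,
      map_zero] at h
    linear_combination h
  have hab : a - b ≠ 0 := by
    rw [hb, Complex.sub_conj]
    simp [him]
    exact him
  have hQ : (ε:ℂ)*(a^2+a*b+b^2) + (a+b) + 3*k^2*ε = 0 := by
    have hfac : (a - b) * ((ε:ℂ)*(a^2+a*b+b^2) + (a+b) + 3*k^2*ε) = 0 := by
      linear_combination eq1 - eq2
    rcases mul_eq_zero.mp hfac with h | h
    · exact absurd h hab
    · exact h
  have hE : (ε:ℂ)^2*(a+b)^3 + 2*ε*(a+b)^2 + (a+b) + 3*k^2*ε^2*(a+b) + (4/3)*k^2*ε = 0 := by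
    linear_combination (-(ε:ℂ)/2) * eq1 + (-(ε:ℂ)/2) * eq2 + ((3*(ε:ℂ)*(a+b)+2)/2) * hQ
  -- pass to real expressions
  have hS : a + b = 2*(x:ℂ) := by
    rw [hb, Complex.add_conj]; push_cast; ring
  have hP : a * b = (x:ℂ)^2 + (y:ℂ)^2 := by
    rw [hb, Complex.mul_conj, Complex.normSq_apply]; push_cast; ring
  have hER : ε^2*(2*x)^3 + 2*ε*(2*x)^2 + (2*x) + 3*k^2*ε^2*(2*x) + (4/3)*k^2*ε = 0 := by
    rw [hS] at hE
    have h : ((ε^2*(2*x)^3 + 2*ε*(2*x)^2 + (2*x) + 3*k^2*ε^2*(2*x) + (4/3)*k^2*ε : ℝ) : ℂ) = 0 := by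
      push_cast
      linear_combination hE
    exact_mod_cast h
  have hQR : ε*((2*x)^2 - (x^2+y^2)) + 2*x + 3*k^2*ε = 0 := by
    have h : ((ε*((2*x)^2 - (x^2+y^2)) + 2*x + 3*k^2*ε : ℝ) : ℂ) = 0 := by
      push_cast
      linear_combination hQ - ((ε:ℂ)*((a+b)+2*(x:ℂ))+1)*hS + (ε:ℂ)*hP
    exact_mod_cast h
  -- resolvent for u = 2 ε x
  obtain ⟨u, hu_def⟩ : ∃ u : ℝ, u = 2*ε*x := ⟨_, rfl⟩
  have hu : u*(1+u)^2 + k^2*ε^2*(3*u + 4/3) = 0 := by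
    rw [hu_def]; linear_combination ε * hER
  have hK : 0 < k^2*ε^2 := by positivity
  have h1 : -4/9 < u := by
    by_contra hcon
    push_neg at hcon
    have hP1 : 0 ≤ (-u-4/9)*(1+u)^2 := mul_nonneg (by linarith) (sq_nonneg _)
    have hP2 : 0 ≤ (k^2*ε^2)*(-u-4/9) := mul_nonneg hK.le (by linarith)
    have hsum : (-u-4/9)*(1+u)^2 + 3*((k^2*ε^2)*(-u-4/9)) + (4/9)*(1+u)^2 = 0 := by
      linear_combination -hu
    have hz2 : (k^2*ε^2)*(-u-4/9) = 0 := by nlinarith [sq_nonneg (1+u)]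
    have hzf : -u-4/9 = 0 := by
      rcases mul_eq_zero.mp hz2 with h' | h'
      · exact absurd h' hK.ne'
      · exact h'
    have hu1 : u = -4/9 := by linarith
    rw [hu1] at hsum
    norm_num at hsum
  have h2 : u < 0 := by
    by_contra hcon
    push_neg at hcon
    have h4 : (k^2*ε^2)*(4/3) ≤ (k^2*ε^2)*(3*u+4/3) :=
      mul_le_mul_of_nonneg_left (by linarith) hK.le
    have h5 : 0 ≤ u*(1+u)^2 := mul_nonneg hcon (sq_nonneg _)
    nlinarith
  have hsq : (25:ℝ)/81 ≤ (1+u)^2 := by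
    have hprod : 0 < (u+4/9)*(u+14/9) :=
      mul_pos (by linarith) (by linarith)
    nlinarith [hprod]
  have h3 : -u ≤ 108/25 * (k^2*ε^2) := by
    have hfac : (-u) * (1+u)^2 = k^2*ε^2*(3*u+4/3) := by linear_combination -hu
    have hb1 : k^2*ε^2*(3*u+4/3) ≤ k^2*ε^2*(4/3) :=
      mul_le_mul_of_nonneg_left (by linarith) hK.le
    have hb2 : (-u) * (25/81) ≤ (-u) * (1+u)^2 :=
      mul_le_mul_of_nonneg_left hsq (by linarith)
    linarith
  -- denominator
  obtain ⟨D, hD_def⟩ : ∃ D : ℝ, D = 3*(1+u)^2 + 5*k^2*ε^2 := ⟨_, rfl⟩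
  have hD_lb : 25/27 ≤ D := by rw [hD_def]; nlinarith
  have hD_pos : 0 < D := by linarith
  have hDC : (D:ℂ) ≠ 0 := by exact_mod_cast hD_pos.ne'
  have hDc : 3 + 3 * (ε:ℂ) * (a + b) + (ε:ℂ)^2 * (3 * (a * b) - 4 * (k:ℂ)^2) = (D : ℂ) := by
    rw [hD_def, hu_def]
    push_cast
    linear_combination (3*(ε:ℂ))*hS + (3*(ε:ℂ)^2)*hP
      + (-3*(ε:ℂ))*(by push_cast; exact_mod_cast congrArg (fun r : ℝ => (r:ℂ)) hQR :
          (ε:ℂ)*((2*(x:ℂ))^2 - ((x:ℂ)^2+(y:ℂ)^2)) + 2*(x:ℂ) + 3*(k:ℂ)^2*(ε:ℂ) = 0)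
  constructor
  · have hval : (k:ℂ)^2 * gradA ε k a b = ((k^2 * (-4*ε*(1+u)) / D : ℝ) : ℂ) := by
      rw [gradA]
      rw [show 3 + 3 * (ε:ℂ) * (a + b) + (ε:ℂ)^2 * (3 * a * b - 4 * (k:ℂ)^2) = (D:ℂ) by
        linear_combination hDc]
      rw [hS]
      push_cast [hu_def]
      rw [← mul_div_assoc]
      congr 1
      all_goals ring
    rw [hval, Complex.norm_real, Real.norm_eq_abs, abs_div, abs_of_pos hD_pos,
      div_le_iff₀ hD_pos]
    have habs : |k^2 * (-4*ε*(1+u))| = k^2*(4*ε*(1+u)) := by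
      rw [abs_of_nonpos (by nlinarith : k^2 * (-4*ε*(1+u)) ≤ 0)]; ring
    rw [habs]
    have t1 : 0 ≤ (k^2*ε) * (D - 25/27) := by
      apply mul_nonneg (by positivity); linarith
    have t2 : 0 ≤ (k^2*ε) * (-u) := by
      apply mul_nonneg (by positivity); linarith
    nlinarith
  · have hval : (k:ℂ)^2 * gradB ε k a b = ((k^2 * (-4*ε^2) / D : ℝ) : ℂ) := by
      rw [gradB]
      rw [show 3 + 3 * (ε:ℂ) * (a + b) + (ε:ℂ)^2 * (3 * a * b - 4 * (k:ℂ)^2) = (D:ℂ) by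
        linear_combination hDc]
      push_cast
      rw [← mul_div_assoc]
    rw [hval, Complex.norm_real, Real.norm_eq_abs, abs_div, abs_of_pos hD_pos,
      div_le_iff₀ hD_pos]
    have habs : |k^2 * (-4*ε^2)| = 4*k^2*ε^2 := by
      rw [abs_of_nonpos (by nlinarith : k^2 * (-4*ε^2) ≤ 0)]; ring
    rw [habs]
    have t1 : 0 ≤ (k^2*ε^2) * (D - 25/27) := by
      apply mul_nonneg (by positivity); linarith
    nlinarith

theorem grad_slow_generator_tendsto_euler (k : ℝ) (hk : k ≠ 0) (l₁ l₂ : ℝ → ℂ)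
    (hroot₁ : ∀ ε : ℝ, 0 < ε → gradP ε k (l₁ ε) = 0)
    (hroot₂ : ∀ ε : ℝ, 0 < ε → gradP ε k (l₂ ε) = 0)
    (hnonreal : ∀ ε : ℝ, 0 < ε → (l₁ ε).im ≠ 0)
    (hconj : ∀ ε : ℝ, 0 < ε → l₂ ε = starRingEnd ℂ (l₁ ε)) :
    Filter.Tendsto (fun ε : ℝ => (k : ℂ)^2 * gradA ε k (l₁ ε) (l₂ ε))
      (nhdsWithin 0 (Set.Ioi 0)) (nhds (0 : ℂ)) ∧
    Filter.Tendsto (fun ε : ℝ => (k : ℂ)^2 * gradB ε k (l₁ ε) (l₂ ε))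
      (nhdsWithin 0 (Set.Ioi 0)) (nhds (0 : ℂ)) := by
  have key : ∀ ε : ℝ, 0 < ε →
      ‖(k:ℂ)^2 * gradA ε k (l₁ ε) (l₂ ε)‖ ≤ 108/25 * k^2 * ε ∧
      ‖(k:ℂ)^2 * gradB ε k (l₁ ε) (l₂ ε)‖ ≤ 108/25 * k^2 * ε^2 := by
    intro ε hε
    rw [hconj ε hε]
    exact grad_aux k ε hk hε (l₁ ε) (hroot₁ ε hε) (hnonreal ε hε)
  constructor
  · apply squeeze_zero_norm' (a := fun ε : ℝ => 108/25 * k^2 * ε)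
    · filter_upwards [self_mem_nhdsWithin] with ε hε
      exact (key ε hε).1
    · have hg : Filter.Tendsto (fun ε : ℝ => 108/25 * k^2 * ε) (nhds 0) (nhds 0) := by
        have := ((continuous_const.mul continuous_id : Continuous fun ε : ℝ => 108/25 * k^2 * ε)).tendsto 0
        convert this using 2 <;> simp
      exact hg.mono_left nhdsWithin_le_nhds
  · apply squeeze_zero_norm' (a := fun ε : ℝ => 108/25 * k^2 * ε^2)
    · filter_upwards [self_mem_nhdsWithin] with ε hε
      exact (key ε hε).2
    · have hg : Filter.Tendsto (fun ε : ℝ => 108/25 * k^2 * ε^2) (nhds 0) (nhds 0) := by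
        have := ((continuous_const.mul (continuous_pow 2) : Continuous fun ε : ℝ => 108/25 * k^2 * ε^2)).tendsto 0
        convert this using 2 <;> simp
      exact hg.mono_left nhdsWithin_le_nhds
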